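/- In the double extension Lie algebra 𝔤(𝔨) = 𝔥 ⊕ 𝔨 ⊕ 𝔫 ⊕ 𝔪 built from a (𝔨,B)-extension of a naturally reductive infinitesimal model, the diagonal 𝔞 = {k + n_k : k ∈ 𝔨} ⊆ 𝔨 ⊕ 𝔫 is an Abelian ideal of 𝔤(𝔨) that commutes with 𝔥 ⊕ 𝔪. In particular 𝔤(𝔨) is never semisimple (when 𝔨 ≠ 0). -/

import Mathlib

/-!
The `𝔨`-component of the model bracket carries the term `Σᵢ B([kᵢ, n], m) kᵢ`, which for an
invariant symmetric form and a `B`-dual family `(kᵢ)` is just `[n, m]`. Hence bracketing with a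
diagonal element `c + n_c` produces `[c, b] - [c, m]` in both the `𝔨`- and the `𝔫`-slot, while all
terms involving `𝔥` or `𝔪` cancel because `c` acts through `ad ⊕ φ` both as an element of `𝔨` and
of `𝔫`.
-/

open scoped RealInnerProductSpace BigOperators

/-- The Nomizu bracket of the double extension `𝔤(𝔨) = 𝔥 ⊕ 𝔨 ⊕ 𝔫 ⊕ 𝔪`, modelled on
`(𝔪 →ₗ 𝔪) × K × K × M` (with `𝔥 ⊆ 𝔰𝔬(𝔪)` as endomorphisms of `𝔪`, the isotropy part
`𝔥 ⊕ 𝔨` acting on `𝔫 ⊕ 𝔪` via `ad ⊕ ψ`, `ψ = ad ⊕ φ`), built from the extended model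
`T = T₀ + Σᵢ φ(kᵢ)∧nᵢ + 2T_𝔫`, `R = R₀ + Σᵢ ψ(kᵢ)⊙ψ(kᵢ)`. -/
noncomputable def dblBracket {K M : Type*} [LieRing K] [LieAlgebra ℝ K]
    [NormedAddCommGroup M] [InnerProductSpace ℝ M] {l : ℕ}
    (Bf : K →ₗ[ℝ] K →ₗ[ℝ] ℝ) (k : Fin l → K) (φ : K →ₗ[ℝ] M →ₗ[ℝ] M)
    (T0 : M →ₗ[ℝ] M →ₗ[ℝ] M) (R0 : M →ₗ[ℝ] M →ₗ[ℝ] (M →ₗ[ℝ] M))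
    (u v : (M →ₗ[ℝ] M) × K × K × M) : (M →ₗ[ℝ] M) × K × K × M :=
  let A := u.1; let a := u.2.1; let n := u.2.2.1; let x := u.2.2.2
  let A' := v.1; let b := v.2.1; let m := v.2.2.1; let y := v.2.2.2
  (A ∘ₗ A' - A' ∘ₗ A - R0 x y,
   ⁅a, b⁆ - ∑ i : Fin l, (Bf ⁅k i, n⁆ m + ⟪φ (k i) x, y⟫) • k i,
   ⁅a, m⁆ - ⁅b, n⁆ - ((2 : ℝ) • ⁅n, m⁆ + ∑ i : Fin l, ⟪φ (k i) x, y⟫ • k i),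
   A y - A' x + φ a y - φ b x - (φ n y - φ m x + T0 x y))

section InvariantForm

variable {R K : Type*} [CommRing R] [LieRing K] [LieAlgebra R K] (B : K →ₗ[R] K →ₗ[R] R)

theorem invariant_form_lie_left_eq (hsymm : ∀ x y : K, B x y = B y x)
    (hinv : ∀ z x y : K, B ⁅z, x⁆ y + B x ⁅z, y⁆ = 0) (a c m : K) :
    B ⁅a, c⁆ m = B ⁅c, m⁆ a := by
  have hskew : B ⁅a, c⁆ m = -B ⁅c, a⁆ m := by
    rw [← lie_skew c a, map_neg, LinearMap.neg_apply, neg_neg]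
  rw [hskew, hsymm ⁅c, m⁆ a]
  linear_combination -hinv c a m

theorem sum_invariant_form_lie_smul_eq_lie {ι : Type*} [Fintype ι] (k : ι → K)
    (hsymm : ∀ x y : K, B x y = B y x) (hinv : ∀ z x y : K, B ⁅z, x⁆ y + B x ⁅z, y⁆ = 0)
    (hcomplete : ∀ x : K, ∑ i, B x (k i) • k i = x) (c m : K) :
    ∑ i, B ⁅k i, c⁆ m • k i = ⁅c, m⁆ := by
  simp_rw [invariant_form_lie_left_eq B hsymm hinv]
  exact hcomplete _

end InvariantForm

section DoubleExtension

variable {K M : Type*} [LieRing K] [LieAlgebra ℝ K] [NormedAddCommGroup M]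
  [InnerProductSpace ℝ M] {l : ℕ} (Bf : K →ₗ[ℝ] K →ₗ[ℝ] ℝ) (k : Fin l → K)
  (φ : K →ₗ[ℝ] M →ₗ[ℝ] M) (T0 : M →ₗ[ℝ] M →ₗ[ℝ] M) (R0 : M →ₗ[ℝ] M →ₗ[ℝ] (M →ₗ[ℝ] M))

theorem dblBracket_diagonal_left (hsymm : ∀ x y : K, Bf x y = Bf y x)
    (hinv : ∀ z x y : K, Bf ⁅z, x⁆ y + Bf x ⁅z, y⁆ = 0)
    (hcomplete : ∀ x : K, ∑ i : Fin l, Bf x (k i) • k i = x)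
    (c : K) (A : M →ₗ[ℝ] M) (b m : K) (y : M) :
    dblBracket Bf k φ T0 R0 (0, c, c, 0) (A, b, m, y) =
      (0, ⁅c, b⁆ - ⁅c, m⁆, ⁅c, b⁆ - ⁅c, m⁆, 0) := by
  have hsum := sum_invariant_form_lie_smul_eq_lie Bf k hsymm hinv hcomplete c m
  simp only [dblBracket, inner_zero_left, map_zero, LinearMap.zero_apply, add_zero,
    zero_smul, Finset.sum_const_zero, LinearMap.zero_comp, LinearMap.comp_zero, sub_zero, hsum,
    Prod.mk.injEq, true_and]
  refine ⟨?_, by abel⟩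
  rw [← lie_skew b c, two_smul]
  abel

theorem dblBracket_diagonal_right_eq_zero (c : K) (A : M →ₗ[ℝ] M) (x : M) :
    dblBracket Bf k φ T0 R0 (A, 0, 0, x) (0, c, c, 0) = 0 := by
  simp [dblBracket, Prod.ext_iff]

end DoubleExtension

theorem diagonal_is_abelian_ideal_general
    {K M : Type*} [LieRing K] [LieAlgebra ℝ K]
    [NormedAddCommGroup M] [InnerProductSpace ℝ M] {l : ℕ}
    (Bf : K →ₗ[ℝ] K →ₗ[ℝ] ℝ)
    (hsymm : ∀ x y : K, Bf x y = Bf y x)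
    (hinv : ∀ z x y : K, Bf ⁅z, x⁆ y + Bf x ⁅z, y⁆ = 0)
    (k : Fin l → K)
    (hcomplete : ∀ x : K, ∑ i : Fin l, Bf x (k i) • k i = x)
    (φ : K →ₗ[ℝ] M →ₗ[ℝ] M)
    (T0 : M →ₗ[ℝ] M →ₗ[ℝ] M) (R0 : M →ₗ[ℝ] M →ₗ[ℝ] (M →ₗ[ℝ] M)) :
    ∀ c : K,
      -- the diagonal commutes with 𝔥 ⊕ 𝔪
      (∀ (A : M →ₗ[ℝ] M) (x : M),
        dblBracket Bf k φ T0 R0 (0, c, c, 0) (A, 0, 0, x) = 0 ∧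
        dblBracket Bf k φ T0 R0 (A, 0, 0, x) (0, c, c, 0) = 0) ∧
      -- the diagonal is Abelian
      (∀ c' : K, dblBracket Bf k φ T0 R0 (0, c, c, 0) (0, c', c', 0) = 0) ∧
      -- the diagonal is an ideal
      (∀ v : (M →ₗ[ℝ] M) × K × K × M,
        ∃ d : K, dblBracket Bf k φ T0 R0 (0, c, c, 0) v = (0, d, d, 0)) := by
  intro c
  have hdiag := dblBracket_diagonal_left Bf k φ T0 R0 hsymm hinv hcomplete c
  refine ⟨fun A x => ⟨?_, dblBracket_diagonal_right_eq_zero Bf k φ T0 R0 c A x⟩,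
    fun c' => ?_, fun ⟨A, b, m, y⟩ => ⟨_, hdiag A b m y⟩⟩
  · simp [hdiag, Prod.ext_iff]
  · simp [hdiag, Prod.ext_iff]

/-- In the double extension `𝔤(𝔨) = 𝔥 ⊕ 𝔨 ⊕ 𝔫 ⊕ 𝔪`, the diagonal
`𝔞 = {k + n_k : k ∈ 𝔨}` is an Abelian ideal commuting with `𝔥 ⊕ 𝔪`.  (Consequently
`𝔤(𝔨)` is never semisimple when `𝔨 ≠ 0`.) -/
theorem diagonal_is_abelian_ideal
    {K M : Type*} [LieRing K] [LieAlgebra ℝ K]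
    [NormedAddCommGroup M] [InnerProductSpace ℝ M] {l : ℕ}
    (Bf : K →ₗ[ℝ] K →ₗ[ℝ] ℝ)
    (hsymm : ∀ x y : K, Bf x y = Bf y x)
    (hinv : ∀ z x y : K, Bf ⁅z, x⁆ y + Bf x ⁅z, y⁆ = 0)
    (k : Fin l → K)
    (horth : ∀ i j, Bf (k i) (k j) = if i = j then (1 : ℝ) else 0)
    (hcomplete : ∀ x : K, ∑ i : Fin l, Bf x (k i) • k i = x)
    (φ : K →ₗ[ℝ] M →ₗ[ℝ] M)
    (hφLie : ∀ a b : K, φ ⁅a, b⁆ = φ a ∘ₗ φ b - φ b ∘ₗ φ a)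
    (hφskew : ∀ (a : K) (x y : M), ⟪φ a x, y⟫ = -⟪x, φ a y⟫)
    (T0 : M →ₗ[ℝ] M →ₗ[ℝ] M) (R0 : M →ₗ[ℝ] M →ₗ[ℝ] (M →ₗ[ℝ] M)) :
    ∀ c : K,
      -- the diagonal commutes with 𝔥 ⊕ 𝔪
      (∀ (A : M →ₗ[ℝ] M) (x : M),
        dblBracket Bf k φ T0 R0 (0, c, c, 0) (A, 0, 0, x) = 0 ∧
        dblBracket Bf k φ T0 R0 (A, 0, 0, x) (0, c, c, 0) = 0) ∧
      -- the diagonal is Abelian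
      (∀ c' : K, dblBracket Bf k φ T0 R0 (0, c, c, 0) (0, c', c', 0) = 0) ∧
      -- the diagonal is an ideal
      (∀ v : (M →ₗ[ℝ] M) × K × K × M,
        ∃ d : K, dblBracket Bf k φ T0 R0 (0, c, c, 0) v = (0, d, d, 0)) :=
  diagonal_is_abelian_ideal_general Bf hsymm hinv k hcomplete φ T0 R0
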